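/- Let C be a small category. If P is a saturated probe in C, then the P-skeleton construction Sk_P, together with the inclusions sk_{P,X} : Sk_P(X) ↪ X, forms a shell on Psh(C): an idempotent comonad whose counit is pointwise monic and whose naturality squares at monomorphisms are pullbacks; moreover its coalgebras are exactly the P-skeletal presheaves (those all of whose figures are P-singular). -/

import Mathlib

open CategoryTheory Opposite

universe u

namespace ProbeTheory

variable {C : Type u} [SmallCategory C]

/-- An equivalence relation on an object `c` of `C`: for each `d`, a relation on
parallel pairs `d ⟶ c`, reflexive, symmetric, transitive, and closed under
precomposition with arbitrary morphisms. -/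
structure EqRel (c : C) where
  rel : ∀ d : C, (d ⟶ c) → (d ⟶ c) → Prop
  refl : ∀ (d : C) (t : d ⟶ c), rel d t t
  symm : ∀ (d : C) (t₁ t₂ : d ⟶ c), rel d t₁ t₂ → rel d t₂ t₁
  trans : ∀ (d : C) (t₁ t₂ t₃ : d ⟶ c), rel d t₁ t₂ → rel d t₂ t₃ → rel d t₁ t₃
  comp : ∀ (d' d : C) (g : d' ⟶ d) (t₁ t₂ : d ⟶ c), rel d t₁ t₂ → rel d' (g ≫ t₁) (g ≫ t₂)

theorem EqRel.ext' {c : C} {e e' : EqRel c}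
    (h : ∀ (d : C) (t₁ t₂ : d ⟶ c), e.rel d t₁ t₂ ↔ e'.rel d t₁ t₂) : e = e' := by
  cases e; cases e'
  simp only [EqRel.mk.injEq]
  funext d t₁ t₂
  exact propext (h d t₁ t₂)

/-- The restriction `e·f` of an equivalence relation along `f : b ⟶ c`. -/
def EqRel.restrict {b c : C} (e : EqRel c) (f : b ⟶ c) : EqRel b where
  rel d g₁ g₂ := e.rel d (g₁ ≫ f) (g₂ ≫ f)
  refl d t := e.refl d _
  symm d t₁ t₂ h := e.symm d _ _ h
  trans d t₁ t₂ t₃ h h' := e.trans d _ _ _ h h'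
  comp d' d g t₁ t₂ h := by
    simp only [Category.assoc]
    exact e.comp d' d g _ _ h

/-- Containment of equivalence relations. -/
def EqRel.le {c : C} (e e' : EqRel c) : Prop :=
  ∀ (d : C) (t₁ t₂ : d ⟶ c), e.rel d t₁ t₂ → e'.rel d t₁ t₂

/-- A probe: a set of equivalence relations on each object, stable under restriction. -/
structure Probe (C : Type u) [SmallCategory C] where
  P : ∀ c : C, Set (EqRel c)
  restrict_mem : ∀ ⦃b c : C⦄ (f : b ⟶ c) ⦃e : EqRel c⦄, e ∈ P c → e.restrict f ∈ P b

/-- A probe is saturated if each `P c` is upward closed. -/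
def Probe.Saturated (Pr : Probe C) : Prop :=
  ∀ ⦃c : C⦄ ⦃e e' : EqRel c⦄, e ∈ Pr.P c → e.le e' → e' ∈ Pr.P c

/-- The kernel of a figure `x ∈ X(c)`. -/
def figureKernel {X : Cᵒᵖ ⥤ Type u} {c : C} (x : X.obj (op c)) : EqRel c where
  rel d t₁ t₂ := X.map t₁.op x = X.map t₂.op x
  refl _ _ := rfl
  symm _ _ _ h := h.symm
  trans _ _ _ _ h h' := h.trans h'
  comp d' d g t₁ t₂ h := by
    show X.map (g ≫ t₁).op x = X.map (g ≫ t₂).op x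
    rw [op_comp, op_comp, FunctorToTypes.map_comp_apply, FunctorToTypes.map_comp_apply, h]

theorem figureKernel_map {X : Cᵒᵖ ⥤ Type u} {b c : C} (f : b ⟶ c) (x : X.obj (op c)) :
    figureKernel (X.map f.op x) = (figureKernel x).restrict f := by
  apply EqRel.ext'
  intro d t₁ t₂
  show (X.map t₁.op (X.map f.op x) = X.map t₂.op (X.map f.op x)) ↔
    (X.map (t₁ ≫ f).op x = X.map (t₂ ≫ f).op x)
  rw [op_comp, op_comp, FunctorToTypes.map_comp_apply, FunctorToTypes.map_comp_apply]

/-- A figure `x ∈ X(c)` is `P`-singular if its kernel belongs to `P c`. -/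
def Singular (Pr : Probe C) {X : Cᵒᵖ ⥤ Type u} {c : C} (x : X.obj (op c)) : Prop :=
  figureKernel x ∈ Pr.P c

universe u₁ v₁

/-- A shell: an idempotent comonad with pointwise monic counit whose naturality
squares at monomorphisms are pullbacks. -/
structure Shell (E : Type u₁) [Category.{v₁} E] where
  G : Comonad E
  idem : ∀ X : E, IsIso (G.δ.app X)
  monic : ∀ X : E, Mono (G.ε.app X)
  cart : ∀ {X Y : E} (m : X ⟶ Y), Mono m →
    IsPullback ((G : E ⥤ E).map m) (G.ε.app X) (G.ε.app Y) m

/-!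
A natural transformation can only enlarge the kernel of a figure, and a monomorphism preserves
it. Since probes are stable under restriction, the `P`-singular figures of `X` form a subpresheaf
`Sk_P X`; by saturation, the first fact makes `Sk_P` a functor. By the second, every figure of
`Sk_P X` is singular, so `Sk_P (Sk_P X) = Sk_P X` and the comultiplication is invertible; and a
figure of `X` is singular as soon as its image under a mono `X ↪ Y` is, which is exactly the
pullback property of the naturality square at that mono.
-/

section Skeleton

theorem figureKernel_le_figureKernel_app {X Y : Cᵒᵖ ⥤ Type u} (f : X ⟶ Y) {c : C}
    (x : X.obj (op c)) : (figureKernel x).le (figureKernel (f.app (op c) x)) := by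
  intro d t₁ t₂ h
  change Y.map t₁.op (f.app _ x) = Y.map t₂.op (f.app _ x)
  rw [← NatTrans.naturality_apply, ← NatTrans.naturality_apply]
  exact congrArg _ h

theorem figureKernel_app_of_mono {X Y : Cᵒᵖ ⥤ Type u} (m : X ⟶ Y) [Mono m] {c : C}
    (x : X.obj (op c)) : figureKernel (m.app (op c) x) = figureKernel x := by
  refine EqRel.ext' fun d t₁ t₂ => ⟨fun h => ?_, figureKernel_le_figureKernel_app m x d t₁ t₂⟩
  change Y.map t₁.op (m.app _ x) = Y.map t₂.op (m.app _ x) at h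
  rw [← NatTrans.naturality_apply, ← NatTrans.naturality_apply] at h
  exact (mono_iff_injective (m.app _)).1 inferInstance h

variable {Pr : Probe C}

theorem Singular.map {X : Cᵒᵖ ⥤ Type u} {b c : C} (f : b ⟶ c) {x : X.obj (op c)}
    (h : Singular Pr x) : Singular Pr (X.map f.op x) := by
  rw [Singular, figureKernel_map]
  exact Pr.restrict_mem f h

theorem Singular.app (hsat : Pr.Saturated) {X Y : Cᵒᵖ ⥤ Type u} (f : X ⟶ Y) {c : C}
    {x : X.obj (op c)} (h : Singular Pr x) : Singular Pr (f.app (op c) x) :=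
  hsat h (figureKernel_le_figureKernel_app f x)

theorem singular_app_iff_of_mono {X Y : Cᵒᵖ ⥤ Type u} (m : X ⟶ Y) [Mono m] {c : C}
    (x : X.obj (op c)) : Singular Pr (m.app (op c) x) ↔ Singular Pr x := by
  rw [Singular, Singular, figureKernel_app_of_mono]

variable (Pr)

def IsSkeletal (X : Cᵒᵖ ⥤ Type u) : Prop :=
  ∀ (c : C) (x : X.obj (op c)), Singular Pr x

def skeleton (X : Cᵒᵖ ⥤ Type u) : Subfunctor X where
  obj U := {x | Singular Pr (c := U.unop) x}
  map i _ hx := hx.map i.unop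

theorem isSkeletal_skeleton (X : Cᵒᵖ ⥤ Type u) : IsSkeletal Pr (skeleton Pr X).toFunctor :=
  fun _ x => (singular_app_iff_of_mono (Pr := Pr) (skeleton Pr X).ι x).1 x.2

theorem skeleton_eq_top_iff (X : Cᵒᵖ ⥤ Type u) : skeleton Pr X = ⊤ ↔ IsSkeletal Pr X := by
  rw [eq_top_iff]
  exact ⟨fun h c x => h (op c) trivial, fun h U x _ => h U.unop x⟩

variable (hsat : Pr.Saturated)

def skeletonFunctor : (Cᵒᵖ ⥤ Type u) ⥤ Cᵒᵖ ⥤ Type u where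
  obj X := (skeleton Pr X).toFunctor
  map {X Y} f := Subfunctor.lift ((skeleton Pr X).ι ≫ f) (by
    rintro U _ ⟨x, rfl⟩
    exact x.2.app hsat f)

def skeletonComonad : Comonad (Cᵒᵖ ⥤ Type u) where
  toFunctor := skeletonFunctor Pr hsat
  ε := { app X := (skeleton Pr X).ι }
  δ := { app X := Subfunctor.lift (𝟙 _) (by
    rintro U _ ⟨x, rfl⟩
    exact isSkeletal_skeleton Pr X U.unop x) }

theorem isIso_skeletonComonad_δ_app (X : Cᵒᵖ ⥤ Type u) :
    IsIso ((skeletonComonad Pr hsat).δ.app X) := by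
  have : IsIso ((skeletonComonad Pr hsat).ε.app ((skeletonComonad Pr hsat).obj X)) :=
    (Subfunctor.eq_top_iff_isIso _).1 ((skeleton_eq_top_iff Pr _).2 (isSkeletal_skeleton Pr X))
  rw [IsIso.eq_inv_of_inv_hom_id ((skeletonComonad Pr hsat).left_counit X)]
  infer_instance

theorem isPullback_skeletonFunctor_map {X Y : Cᵒᵖ ⥤ Type u} (m : X ⟶ Y) [Mono m] :
    IsPullback ((skeletonFunctor Pr hsat).map m) (skeleton Pr X).ι (skeleton Pr Y).ι m := by
  refine IsPullback.of_forall_isPullback_app fun U => ?_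
  rw [Limits.Types.isPullback_iff]
  refine ⟨rfl, fun x y h => Subtype.ext h.2, fun y x hyx => ⟨⟨x, ?_⟩, Subtype.ext hyx.symm, rfl⟩⟩
  exact (singular_app_iff_of_mono m x).1 (hyx ▸ y.2)

def skeletonShell : Shell (Cᵒᵖ ⥤ Type u) where
  G := skeletonComonad Pr hsat
  idem := isIso_skeletonComonad_δ_app Pr hsat
  monic X := inferInstanceAs (Mono (skeleton Pr X).ι)
  cart m _ := isPullback_skeletonFunctor_map Pr hsat m

def skeletalCoalgebra {X : Cᵒᵖ ⥤ Type u} (hX : IsSkeletal Pr X) :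
    Comonad.Coalgebra (skeletonComonad Pr hsat) where
  A := X
  a := Subfunctor.lift (𝟙 X) (by
    rintro U _ ⟨x, rfl⟩
    exact hX U.unop x)

theorem isSkeletal_coalgebra (A : Comonad.Coalgebra (skeletonComonad Pr hsat)) :
    IsSkeletal Pr A.A := by
  intro c x
  have hx : (A.a.app (op c) x).1 = x :=
    (ConcreteCategory.congr_hom (congr_app A.counit (op c)) x :)
  exact hx ▸ (A.a.app (op c) x).2

end Skeleton

/-- for a saturated probe `P`, the `P`-skeleton construction
(the subpresheaves of `P`-singular figures, with their inclusions as counit)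
forms a shell on the presheaf topos, whose coalgebras are exactly the
`P`-skeletal presheaves. -/
theorem stmt11 (Pr : Probe C) (hsat : Pr.Saturated) :
    ∃ S : Shell (Cᵒᵖ ⥤ Type u),
      (∀ (X : Cᵒᵖ ⥤ Type u) (c : C) (x : X.obj (op c)),
          (∃ y, (S.G.ε.app X).app (op c) y = x) ↔ Singular Pr x)
      ∧ (∀ X : Cᵒᵖ ⥤ Type u,
          (∃ A : Comonad.Coalgebra S.G, A.A = X) ↔
            ∀ (c : C) (x : X.obj (op c)), Singular Pr x) := by
  refine ⟨skeletonShell Pr hsat, fun X c x => Set.ext_iff.1 Subtype.range_coe x, fun X => ?_⟩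
  constructor
  · rintro ⟨A, rfl⟩
    exact isSkeletal_coalgebra Pr hsat A
  · intro hX
    exact ⟨skeletalCoalgebra Pr hsat hX, rfl⟩

end ProbeTheory
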